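/- Let l have L-Lipschitz gradient, let E(x) = ‖x‖₁ - α‖x‖₂ + l(x) be coercive, and let 0 < λ < 1/L. Then any sequence generated by FBS, x^{k+1} ∈ prox_{λ r_α}(x^k - λ∇l(x^k)), is bounded, satisfies Σ_k ‖x^{k+1} - x^k‖₂² < ∞ (hence x^{k+1} - x^k → 0), and every limit point x* satisfies x* ∈ prox_{λ r_α}(x* - λ∇l(x*)), i.e., x* is a stationary point of E. -/

import Mathlib

open Finset Filter Set Topology
open scoped RealInnerProductSpace

noncomputable def norm1 {N : ℕ} (x : EuclideanSpace ℝ (Fin N)) : ℝ := ∑ i, |x i|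

noncomputable def normInf {N : ℕ} (x : EuclideanSpace ℝ (Fin N)) : ℝ := ⨆ i, |x i|

noncomputable def Fobj {N : ℕ} (a lam : ℝ) (y x : EuclideanSpace ℝ (Fin N)) : ℝ :=
  norm1 x - a * ‖x‖ + 1 / (2 * lam) * ‖x - y‖ ^ 2

/-!
Comparing the prox step with the previous iterate and adding the descent lemma
`l w ≤ l z + ⟪∇l z, w - z⟫ + L/2 ‖w - z‖²` gives sufficient decrease of `E = r_α + l`:
`E x⁺ + (1/(2λ) - L/2) ‖x⁺ - x‖² ≤ E x`, with a positive constant because `λ < 1/L`.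
A continuous coercive `E` is bounded below and has bounded sublevel sets, so the iterates stay
in `{E ≤ E x⁰}` and the squared steps telescope to a finite sum. At a cluster point `x*`, the
minimality of `x^{k+1}` passes to the limit along a subsequence, since `x^{k+1} - x^k → 0` and
the prox objective is jointly continuous in the centre and the variable.
-/

theorem isMinOn_of_tendsto {ι P X α : Type*} [TopologicalSpace P] [TopologicalSpace X]
    [TopologicalSpace α] [Preorder α] [OrderClosedTopology α] {F : P → X → α}
    (hF : Continuous (Function.uncurry F)) {s : Set X} {l : Filter ι} [l.NeBot]
    {p : ι → P} {z : ι → X} {p₀ : P} {z₀ : X} (hp : Tendsto p l (𝓝 p₀))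
    (hz : Tendsto z l (𝓝 z₀)) (hmin : ∀ᶠ i in l, IsMinOn (F (p i)) s (z i)) :
    IsMinOn (F p₀) s z₀ := by
  refine isMinOn_iff.2 fun u hu => le_of_tendsto_of_tendsto ?_ ?_
    (hmin.mono fun i hi => isMinOn_iff.1 hi u hu)
  · exact (hF.tendsto (p₀, z₀)).comp (hp.prodMk_nhds hz)
  · exact (hF.tendsto (p₀, u)).comp (hp.prodMk_nhds tendsto_const_nhds)

theorem summable_of_mul_le_sub_succ {u v : ℕ → ℝ} {c m : ℝ} (hc : 0 < c) (hv : ∀ k, 0 ≤ v k)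
    (hm : ∀ k, m ≤ u k) (h : ∀ k, c * v k ≤ u k - u (k + 1)) : Summable v := by
  refine summable_of_sum_range_le (c := (u 0 - m) / c) hv fun n => (le_div_iff₀' hc).2 ?_
  calc c * ∑ k ∈ range n, v k ≤ ∑ k ∈ range n, (u k - u (k + 1)) := by
        rw [mul_sum]; exact sum_le_sum fun k _ => h k
    _ = u 0 - u n := sum_range_sub' u n
    _ ≤ u 0 - m := by linarith [hm n]

theorem tendsto_zero_of_summable_norm_sq {E : Type*} [SeminormedAddCommGroup E] {u : ℕ → E}
    (h : Summable fun k => ‖u k‖ ^ 2) : Tendsto u atTop (𝓝 0) := by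
  rw [tendsto_zero_iff_norm_tendsto_zero]
  simpa using h.tendsto_atTop_zero.sqrt

section Coercive

variable {E : Type*} [SeminormedAddCommGroup E] {f : E → ℝ}

theorem tendsto_cobounded_atTop_of_coercive (hf : ∀ C : ℝ, ∃ R : ℝ, ∀ z, R ≤ ‖z‖ → C ≤ f z) :
    Tendsto f (Bornology.cobounded E) atTop := by
  refine tendsto_atTop.2 fun C => ?_
  obtain ⟨R, hR⟩ := hf C
  rw [← comap_norm_atTop]
  exact mem_comap.2 ⟨Ici R, Ici_mem_atTop R, fun z hz => hR z hz⟩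

theorem exists_norm_le_of_coercive {ι : Type*} (hf : ∀ C : ℝ, ∃ R : ℝ, ∀ z, R ≤ ‖z‖ → C ≤ f z)
    {x : ι → E} {C : ℝ} (hx : ∀ i, f (x i) ≤ C) : ∃ R, ∀ i, ‖x i‖ ≤ R := by
  obtain ⟨R, hR⟩ := hf (C + 1)
  exact ⟨R, fun i => le_of_not_ge fun hi => by linarith [hR (x i) hi, hx i]⟩

theorem Continuous.bddBelow_range_of_coercive [ProperSpace E] (hcont : Continuous f)
    (hf : ∀ C : ℝ, ∃ R : ℝ, ∀ z, R ≤ ‖z‖ → C ≤ f z) : BddBelow (range f) := by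
  obtain ⟨z, hz⟩ := hcont.exists_forall_le <|
    Metric.cobounded_eq_cocompact (α := E) ▸ tendsto_cobounded_atTop_of_coercive hf
  exact ⟨f z, forall_mem_range.2 hz⟩

end Coercive

section ProxObjective

variable {F : Type*} [SeminormedAddCommGroup F]

noncomputable def proxObjective (r : F → ℝ) (lam : ℝ) (y x : F) : ℝ :=
  r x + 1 / (2 * lam) * ‖x - y‖ ^ 2

theorem continuous_uncurry_proxObjective {r : F → ℝ} (hr : Continuous r) (lam : ℝ) :
    Continuous (Function.uncurry (proxObjective r lam)) := by
  unfold proxObjective Function.uncurry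
  fun_prop

end ProxObjective

section LipschitzGradient

variable {F : Type*} [NormedAddCommGroup F] [InnerProductSpace ℝ F] [CompleteSpace F]
  {l : F → ℝ} {g : F → F} {L : ℝ}

theorem le_add_inner_add_sq_of_lipschitz_gradient (hg : ∀ z, HasGradientAt l (g z) z)
    (hLip : ∀ z w, ‖g z - g w‖ ≤ L * ‖z - w‖) (z w : F) :
    l w ≤ l z + ⟪g z, w - z⟫ + L / 2 * ‖w - z‖ ^ 2 := by
  set d := w - z
  -- `l` along the segment minus its quadratic model; the Lipschitz bound makes it antitone.
  let ψ : ℝ → ℝ := fun t => l (z + t • d) - t * ⟪g z, d⟫ - L / 2 * ‖d‖ ^ 2 * t ^ 2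
  have hψ : ∀ t : ℝ, HasDerivAt ψ (⟪g (z + t • d) - g z, d⟫ - L * ‖d‖ ^ 2 * t) t := by
    intro t
    have hline : HasDerivAt (fun t : ℝ => z + t • d) d t := by
      simpa using ((hasDerivAt_id t).smul_const d).const_add z
    have hl : HasDerivAt (fun t : ℝ => l (z + t • d)) ⟪g (z + t • d), d⟫ t := by
      simpa [Function.comp_def, InnerProductSpace.toDual_apply_apply] using
        (hg (z + t • d)).hasFDerivAt.comp_hasDerivAt t hline
    refine ((hl.sub ((hasDerivAt_id t).mul_const ⟪g z, d⟫)).sub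
      ((hasDerivAt_pow 2 t).const_mul (L / 2 * ‖d‖ ^ 2))).congr_deriv ?_
    rw [inner_sub_left]
    norm_num
    ring
  have hanti : AntitoneOn ψ (Icc 0 1) := by
    refine antitoneOn_of_deriv_nonpos (convex_Icc 0 1)
      (fun t _ => (hψ t).continuousAt.continuousWithinAt)
      (fun t _ => (hψ t).differentiableAt.differentiableWithinAt) fun t ht => ?_
    rw [interior_Icc] at ht
    have hgt : ‖g (z + t • d) - g z‖ ≤ L * (t * ‖d‖) := by
      simpa [norm_smul, abs_of_pos ht.1] using hLip (z + t • d) z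
    rw [(hψ t).deriv]
    nlinarith [real_inner_le_norm (g (z + t • d) - g z) d, norm_nonneg d, ht.1.le]
  have h01 := hanti (left_mem_Icc.2 zero_le_one) (right_mem_Icc.2 zero_le_one) zero_le_one
  simp only [ψ, one_smul, zero_smul, add_zero, zero_mul, one_mul, one_pow, sub_zero,
    add_sub_cancel, d] at h01
  linarith

theorem forwardBackward_sufficient_decrease (hg : ∀ z, HasGradientAt l (g z) z)
    (hLip : ∀ z w, ‖g z - g w‖ ≤ L * ‖z - w‖) {r : F → ℝ} {lam : ℝ} (hlam : lam ≠ 0) {z z' : F}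
    (hmin : IsMinOn (proxObjective r lam (z - lam • g z)) univ z') :
    r z' + l z' + (1 / (2 * lam) - L / 2) * ‖z' - z‖ ^ 2 ≤ r z + l z := by
  have hprox := isMinOn_iff.1 hmin z (mem_univ z)
  have hexpand : 1 / (2 * lam) * ‖z' - (z - lam • g z)‖ ^ 2 =
      1 / (2 * lam) * ‖z' - z‖ ^ 2 + ⟪g z, z' - z⟫ + 1 / (2 * lam) * ‖z - (z - lam • g z)‖ ^ 2 := by
    rw [show z' - (z - lam • g z) = (z' - z) + lam • g z by abel, sub_sub_cancel,
      norm_add_sq_real, real_inner_smul_right, real_inner_comm]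
    field_simp
  unfold proxObjective at hprox
  linarith [le_add_inner_add_sq_of_lipschitz_gradient hg hLip z z']

end LipschitzGradient

theorem stmt10_general {N : ℕ} (a lam L : ℝ)
    (hlam : 0 < lam) (hlamL : lam < 1 / L)
    (l : EuclideanSpace ℝ (Fin N) → ℝ)
    (g : EuclideanSpace ℝ (Fin N) → EuclideanSpace ℝ (Fin N))
    (hg : ∀ z, HasGradientAt l (g z) z)
    (hLip : ∀ z w, ‖g z - g w‖ ≤ L * ‖z - w‖)
    (hcoer : ∀ C : ℝ, ∃ R : ℝ, ∀ z, R ≤ ‖z‖ → C ≤ norm1 z - a * ‖z‖ + l z)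
    (x : ℕ → EuclideanSpace ℝ (Fin N))
    (hstep : ∀ k, IsMinOn (Fobj a lam (x k - lam • g (x k))) Set.univ (x (k + 1))) :
    (∃ R, ∀ k, ‖x k‖ ≤ R) ∧
      (Summable fun k => ‖x (k + 1) - x k‖ ^ 2) ∧
      Tendsto (fun k => x (k + 1) - x k) atTop (nhds 0) ∧
      ∀ xs, MapClusterPt xs atTop x →
        IsMinOn (Fobj a lam (xs - lam • g xs)) Set.univ xs := by
  let r : EuclideanSpace ℝ (Fin N) → ℝ := fun z => norm1 z - a * ‖z‖
  have hr : Continuous r := by unfold r norm1; fun_prop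
  have hFobj (y : EuclideanSpace ℝ (Fin N)) : Fobj a lam y = proxObjective r lam y := rfl
  simp only [hFobj] at hstep ⊢
  have hl : Continuous l :=
    continuous_iff_continuousAt.2 fun z => (hg z).differentiableAt.continuousAt
  have hc : 0 < 1 / (2 * lam) - L / 2 := by
    have := (lt_one_div hlam (one_div_pos.1 (hlam.trans hlamL))).1 hlamL
    linarith [show 1 / (2 * lam) = 1 / lam / 2 by ring]
  have hdecr (k : ℕ) : r (x (k + 1)) + l (x (k + 1)) +
      (1 / (2 * lam) - L / 2) * ‖x (k + 1) - x k‖ ^ 2 ≤ r (x k) + l (x k) :=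
    forwardBackward_sufficient_decrease hg hLip hlam.ne' (hstep k)
  have hanti : Antitone fun k => r (x k) + l (x k) :=
    antitone_nat_of_succ_le fun k => by nlinarith [hdecr k, sq_nonneg ‖x (k + 1) - x k‖]
  obtain ⟨m, hm⟩ := (hr.add hl).bddBelow_range_of_coercive hcoer
  have hsum : Summable fun k => ‖x (k + 1) - x k‖ ^ 2 :=
    summable_of_mul_le_sub_succ (u := fun k => r (x k) + l (x k)) hc (fun _ => sq_nonneg _)
      (fun k => hm (mem_range_self (x k))) fun k => by linarith [hdecr k]
  have htend := tendsto_zero_of_summable_norm_sq hsum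
  refine ⟨exists_norm_le_of_coercive hcoer fun k => hanti (Nat.zero_le k), hsum, htend,
    fun xs hxs => ?_⟩
  obtain ⟨φ, hφ, hlim⟩ := hxs.tendsto_subseq
  have hgc : Continuous g :=
    (LipschitzWith.of_dist_le' fun z w => by simpa only [dist_eq_norm] using hLip z w).continuous
  have hlim_succ : Tendsto (fun n => x (φ n + 1)) atTop (𝓝 xs) := by
    simpa using hlim.add (htend.comp hφ.tendsto_atTop)
  exact isMinOn_of_tendsto (continuous_uncurry_proxObjective hr lam)
    (hlim.sub (((hgc.tendsto xs).comp hlim).const_smul lam)) hlim_succ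
    (Eventually.of_forall fun n => hstep (φ n))

theorem stmt10 {N : ℕ} (a lam L : ℝ) (ha : 0 ≤ a) (hL : 0 < L)
    (hlam : 0 < lam) (hlamL : lam < 1 / L)
    (l : EuclideanSpace ℝ (Fin N) → ℝ)
    (g : EuclideanSpace ℝ (Fin N) → EuclideanSpace ℝ (Fin N))
    (hg : ∀ z, HasGradientAt l (g z) z)
    (hLip : ∀ z w, ‖g z - g w‖ ≤ L * ‖z - w‖)
    (hcoer : ∀ C : ℝ, ∃ R : ℝ, ∀ z, R ≤ ‖z‖ → C ≤ norm1 z - a * ‖z‖ + l z)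
    (x : ℕ → EuclideanSpace ℝ (Fin N))
    (hstep : ∀ k, IsMinOn (Fobj a lam (x k - lam • g (x k))) Set.univ (x (k + 1))) :
    (∃ R, ∀ k, ‖x k‖ ≤ R) ∧
      (Summable fun k => ‖x (k + 1) - x k‖ ^ 2) ∧
      Tendsto (fun k => x (k + 1) - x k) atTop (nhds 0) ∧
      ∀ xs, MapClusterPt xs atTop x →
        IsMinOn (Fobj a lam (xs - lam • g xs)) Set.univ xs :=
  stmt10_general a lam L hlam hlamL l g hg hLip hcoer x hstep
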